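/- In a WDM ring with shortest-path routing, for any node n and wavelength λ, P(segment n used on λ) = P(segment ⌈n⌉_λ used on λ) - P(S ∈ {n, ..., ⌈n⌉_λ - 1} and G_λ ≠ S), where ⌈n⌉_λ is the clockwise shift of n to the nearest node homed on λ. In particular, the utilization of any non-critical segment is at most that of the next critical segment clockwise. -/

import Mathlib

noncomputable section

/-- The node reached from `x` by moving `d` segments clockwise on an `N`-node ring. -/
def wrap {N : ℕ} (x : Fin N) (d : ℕ) : Fin N := ⟨(x.1 + d) % N, Nat.mod_lt _ x.pos⟩

/-- The clockwise gap at node `x` with respect to the active set `A`: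
the distance from `x` to the next active node clockwise. -/
def gapLen {N : ℕ} (A : Finset (Fin N)) (x : Fin N) : ℕ :=
  sInf {d : ℕ | 0 < d ∧ wrap x d ∈ A}

/-- The length of the largest gap of the active set `A`. -/
def maxGap {N : ℕ} (A : Finset (Fin N)) : ℕ := A.sup (gapLen A)

/-- The set of active nodes at which a gap of maximal length starts (clockwise). -/
def maxSet {N : ℕ} (A : Finset (Fin N)) : Finset (Fin N) :=
  A.filter (fun x => gapLen A x = maxGap A)

/-- Clockwise hop distance from `a` to `b`. -/
def dCw {N : ℕ} (a b : Fin N) : ℕ := (b.1 + N - a.1) % N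

/-- Probability (over the uniform tie-break among maximal gaps) that the chosen
largest gap of active set `A` starts (clockwise) at node `g`. -/
def clgStartProb {N : ℕ} (A : Finset (Fin N)) (g : Fin N) : ℚ :=
  if g ∈ maxSet A then 1 / ((maxSet A).card : ℚ) else 0

/-- Probability (over the uniform tie-break among maximal gaps) that the clockwise
segment entering node `m` is traversed under shortest-path routing, when the
active set is `A` and the sender is `S`: the clockwise copy travels from `S` to the
start of the chosen largest gap. -/
def segUseProb {N : ℕ} (A : Finset (Fin N)) (S m : Fin N) : ℚ :=
  (((maxSet A).filter (fun g => 1 ≤ dCw S m ∧ dCw S m ≤ dCw S g)).card : ℚ) /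
    ((maxSet A).card : ℚ)

/-- The nodes of an `N`-node ring homed on wavelength `lam` (out of `Λ` wavelengths):
those whose index is congruent to `lam` modulo `Λ`. -/
def homed (N Λ lam : ℕ) : Finset (Fin N) :=
  Finset.univ.filter (fun i => i.1 % Λ = lam % Λ)

end

noncomputable section
/-- Probability (over the tie-break among maximal gaps) that the chosen largest gap of
`A` does not start at the sender `S`. -/
def clgNeSProb {N : ℕ} (A : Finset (Fin N)) (S : Fin N) : ℚ :=
  (((maxSet A).filter (fun g => g ≠ S)).card : ℚ) / ((maxSet A).card : ℚ)

/-- Offset from node `n` to the next node (clockwise) congruent to `lam` modulo `Λ`. -/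
def offTo (Λ lam : ℕ) {N : ℕ} (n : Fin N) : ℕ := (lam % Λ + Λ - n.1 % Λ) % Λ

section Helpers
variable {N : ℕ}

lemma wrap_zero (x : Fin N) : wrap x 0 = x := by
  apply Fin.ext; simp [wrap, Nat.mod_eq_of_lt x.2]

lemma wrap_wrap (x : Fin N) (a b : ℕ) : wrap (wrap x a) b = wrap x (a + b) := by
  apply Fin.ext; simp [wrap, Nat.mod_add_mod, Nat.add_assoc]

lemma wrap_mod (x : Fin N) (d : ℕ) : wrap x (d % N) = wrap x d := by
  apply Fin.ext; simp [wrap, Nat.add_mod_mod]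

lemma wrap_N (x : Fin N) : wrap x N = x := by
  have := wrap_mod x N
  rw [Nat.mod_self] at this
  rw [← this, wrap_zero]

lemma wrap_sub_N (x : Fin N) {a : ℕ} (h : N ≤ a) : wrap x a = wrap x (a - N) := by
  rw [← wrap_mod x a, Nat.mod_eq_sub_mod h, wrap_mod]

lemma wrap_inj (x : Fin N) {u v : ℕ} (hu : u < N) (hv : v < N)
    (h : wrap x u = wrap x v) : u = v := by
  have h' : (x.1 + u) % N = (x.1 + v) % N := congrArg Fin.val h
  have h2 : u ≡ v [MOD N] := Nat.ModEq.add_left_cancel' x.1 h'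
  rwa [Nat.ModEq, Nat.mod_eq_of_lt hu, Nat.mod_eq_of_lt hv] at h2

lemma wrap_dCw (a b : Fin N) : wrap a (dCw a b) = b := by
  apply Fin.ext
  show (a.1 + (b.1 + N - a.1) % N) % N = b.1
  rw [Nat.add_mod_mod]
  have ha : a.1 < N := a.2
  have : a.1 + (b.1 + N - a.1) = b.1 + N := by omega
  rw [this, Nat.add_mod_right, Nat.mod_eq_of_lt b.2]

lemma dCw_lt (a b : Fin N) : dCw a b < N := Nat.mod_lt _ a.pos

lemma dCw_wrap (a : Fin N) (d : ℕ) : dCw a (wrap a d) = d % N := by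
  have h1 : wrap a (dCw a (wrap a d)) = wrap a d := wrap_dCw a (wrap a d)
  have h2 : wrap a (d % N) = wrap a d := wrap_mod a d
  exact wrap_inj a (dCw_lt a _) (Nat.mod_lt _ a.pos) (h1.trans h2.symm)

lemma dCw_self (a : Fin N) : dCw a a = 0 := by
  have := dCw_wrap a 0
  rwa [wrap_zero, Nat.zero_mod] at this

lemma dCw_eq_zero_iff (a b : Fin N) : dCw a b = 0 ↔ b = a := by
  constructor
  · intro h
    have := wrap_dCw a b
    rw [h, wrap_zero] at this
    exact this.symm
  · rintro rfl; exact dCw_self _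

lemma wrap_homed_iff {Λ lam : ℕ} (hdvd : Λ ∣ N) (x : Fin N) (k : ℕ) :
    wrap x k ∈ homed N Λ lam ↔ (x.1 + k) % Λ = lam % Λ := by
  simp only [homed, Finset.mem_filter, Finset.mem_univ, true_and, wrap]
  rw [Nat.mod_mod_of_dvd _ hdvd]

end Helpers

lemma count_key {N Λ lam : ℕ} (hΛ0 : 0 < Λ) (hdvd : Λ ∣ N)
    (S : Fin N) (M D : Finset (Fin N)) (hM : M ⊆ insert S D) (hD : D ⊆ homed N Λ lam)
    (n : Fin N) :
    (M.filter (fun g => 1 ≤ dCw S n ∧ dCw S n ≤ dCw S g)).card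
      + (if S ∈ (Finset.range (offTo Λ lam n)).image (wrap n)
          then (M.filter (fun g => g ≠ S)).card else 0)
      = (M.filter (fun g => 1 ≤ dCw S (wrap n (offTo Λ lam n))
          ∧ dCw S (wrap n (offTo Λ lam n)) ≤ dCw S g)).card := by
  have hN0 : 0 < N := n.pos
  have hΛN : Λ ≤ N := Nat.le_of_dvd hN0 hdvd
  set t := offTo Λ lam n with ht_def
  have htΛ : t < Λ := by rw [ht_def]; exact Nat.mod_lt _ hΛ0
  have htN : t < N := lt_of_lt_of_le htΛ hΛN
  rcases Nat.eq_zero_or_pos t with ht0 | htpos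
  · rw [ht0, wrap_zero]
    simp
  -- t > 0
  have hnΛ : n.1 % Λ < Λ := Nat.mod_lt _ hΛ0
  have key1 : (n.1 + t) % Λ = lam % Λ := by
    have hx : n.1 % Λ + (lam % Λ + Λ - n.1 % Λ) = lam % Λ + Λ := by
      have : lam % Λ < Λ := Nat.mod_lt _ hΛ0
      omega
    calc (n.1 + t) % Λ = (n.1 % Λ + t) % Λ := by rw [Nat.mod_add_mod]
      _ = (n.1 % Λ + (lam % Λ + Λ - n.1 % Λ)) % Λ := by
            rw [ht_def]; simp only [offTo]; rw [Nat.add_mod_mod]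
      _ = (lam % Λ + Λ) % Λ := by rw [hx]
      _ = lam % Λ := by rw [Nat.add_mod_right, Nat.mod_mod_of_dvd _ dvd_rfl]
  have key2 : ∀ k, k < t → (n.1 + k) % Λ ≠ lam % Λ := by
    intro k hk hcon
    have h : (n.1 + k) % Λ = (n.1 + t) % Λ := by rw [hcon, key1]
    have h2 : k ≡ t [MOD Λ] := Nat.ModEq.add_left_cancel' n.1 h
    rw [Nat.ModEq, Nat.mod_eq_of_lt (lt_trans hk htΛ), Nat.mod_eq_of_lt htΛ] at h2
    omega
  have hnot : ∀ k, k < t → wrap n k ∉ homed N Λ lam := fun k hk h =>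
    key2 k hk ((wrap_homed_iff hdvd n k).1 h)
  have hgS : ∀ g ∈ M, g = S ∨ g ∈ homed N Λ lam := by
    intro g hg
    rcases Finset.mem_insert.1 (hM hg) with h | h
    · exact Or.inl h
    · exact Or.inr (hD h)
  have gadget2 : ∀ (g : Fin N) (a : ℕ), g ∈ homed N Λ lam → wrap n a = S →
      a + dCw S g < t → False := by
    intro g a ghom ha hlt
    have hg' : g = wrap n (a + dCw S g) := by rw [← wrap_wrap, ha, wrap_dCw]
    exact hnot _ hlt (hg' ▸ ghom)
  have gadget1 : ∀ (g : Fin N) (a : ℕ), g ∈ homed N Λ lam → wrap n a = S →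
      N ≤ a + dCw S g → a + dCw S g < N + t → False := by
    intro g a ghom ha h1 h2
    have hg' : g = wrap n (a + dCw S g) := by rw [← wrap_wrap, ha, wrap_dCw]
    rw [wrap_sub_N n h1] at hg'
    exact hnot _ (by omega) (hg' ▸ ghom)
  have hback : ∀ a : ℕ, 1 ≤ a → a < N → wrap n a = S → dCw S n = N - a := by
    intro a h1 h2 ha
    have hw : wrap S (N - a) = n := by
      rw [← ha, wrap_wrap]
      have hx : a + (N - a) = N := by omega
      rw [hx, wrap_N]
    rw [← hw, dCw_wrap, Nat.mod_eq_of_lt (by omega)]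
  have hfwd : ∀ a c : ℕ, wrap n a = S → (a + c = t ∨ a + c = N + t) → c < N →
      dCw S (wrap n t) = c := by
    intro a c ha hac hcN
    have hw : wrap S c = wrap n t := by
      rw [← ha, wrap_wrap]
      rcases hac with h | h
      · rw [h]
      · rw [h, wrap_sub_N n (Nat.le_add_right N t), Nat.add_sub_cancel_left]
    rw [← hw, dCw_wrap, Nat.mod_eq_of_lt hcN]
  by_cases hS : S ∈ (Finset.range t).image (wrap n)
  · rw [if_pos hS]
    obtain ⟨j, hjmem, hwj⟩ := Finset.mem_image.1 hS
    rw [Finset.mem_range] at hjmem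
    have h1 : (M.filter (fun g => 1 ≤ dCw S n ∧ dCw S n ≤ dCw S g)) = ∅ := by
      rw [Finset.filter_eq_empty_iff]
      rintro g hg ⟨hge1, hle⟩
      have hj1 : 1 ≤ j := by
        by_contra hcj
        have hj0 : j = 0 := by omega
        rw [hj0, wrap_zero] at hwj
        rw [← hwj, dCw_self] at hge1; omega
      have hdn : dCw S n = N - j := hback j hj1 (by omega) hwj
      rcases hgS g hg with rfl | ghom
      · rw [dCw_self] at hle; omega
      · exact gadget1 g j ghom hwj (by have := dCw_lt S g; omega)
          (by have := dCw_lt S g; omega)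
    have h2 : M.filter (fun g => 1 ≤ dCw S (wrap n t) ∧ dCw S (wrap n t) ≤ dCw S g)
        = M.filter (fun g => g ≠ S) := by
      apply Finset.filter_congr
      intro g hg
      have hdm : dCw S (wrap n t) = t - j :=
        hfwd j (t - j) hwj (Or.inl (by omega)) (by omega)
      rw [hdm]
      constructor
      · rintro ⟨h1', h2'⟩ rfl
        rw [dCw_self] at h2'; omega
      · intro hgne
        refine ⟨by omega, ?_⟩
        rcases hgS g hg with rfl | ghom
        · exact absurd rfl hgne
        · by_contra hlt
          push_neg at hlt
          exact gadget2 g j ghom hwj (by omega)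
    rw [h1, h2, Finset.card_empty, zero_add]
  · rw [if_neg hS, add_zero]
    apply congrArg Finset.card
    apply Finset.filter_congr
    intro g hg
    have hSW : ∀ k, k < t → wrap n k ≠ S := by
      intro k hk hcon
      exact hS (Finset.mem_image.2 ⟨k, Finset.mem_range.2 hk, hcon⟩)
    have hSn : S ≠ n := by
      intro h
      exact hSW 0 htpos (by rw [wrap_zero]; exact h.symm)
    have heS : wrap n (dCw n S) = S := wrap_dCw n S
    set e := dCw n S with he_def
    have he1 : 1 ≤ e := by
      rcases Nat.eq_zero_or_pos e with h | h
      · exact absurd ((dCw_eq_zero_iff n S).1 h) hSn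
      · exact h
    have heN : e < N := dCw_lt n S
    have het : t ≤ e := by
      by_contra h
      push_neg at h
      exact hSW e h heS
    have hdn : dCw S n = N - e := hback e he1 heN heS
    rcases eq_or_lt_of_le het with heq | hlt
    · have hdm : dCw S (wrap n t) = 0 := by
        rw [heq, heS, dCw_self]
      rw [hdm, hdn]
      constructor
      · rintro ⟨h1', h2'⟩
        exfalso
        rcases hgS g hg with rfl | ghom
        · rw [dCw_self] at h2'; omega
        · exact gadget1 g e ghom heS (by have := dCw_lt S g; omega)
            (by have := dCw_lt S g; omega)
      · rintro ⟨h1', h2'⟩; omega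
    · have hdm : dCw S (wrap n t) = N - e + t :=
        hfwd e (N - e + t) heS (Or.inr (by omega)) (by omega)
      rw [hdm, hdn]
      rcases hgS g hg with rfl | ghom
      · rw [dCw_self]
        constructor
        · rintro ⟨h1', h2'⟩; omega
        · rintro ⟨h1', h2'⟩; omega
      · constructor
        · rintro ⟨h1', h2'⟩
          refine ⟨by omega, ?_⟩
          by_contra hc
          push_neg at hc
          exact gadget1 g e ghom heS (by omega) (by omega)
        · rintro ⟨h1', h2'⟩
          exact ⟨by omega, by omega⟩

lemma keyQ {N Λ lam : ℕ} (hΛ0 : 0 < Λ) (hdvd : Λ ∣ N) (S : Fin N) (D : Finset (Fin N))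
    (hD : D ⊆ homed N Λ lam) (n : Fin N) :
    segUseProb (insert S D) S n
      + (if S ∈ (Finset.range (offTo Λ lam n)).image (wrap n)
          then clgNeSProb (insert S D) S else 0)
      = segUseProb (insert S D) S (wrap n (offTo Λ lam n)) := by
  have hM : maxSet (insert S D) ⊆ insert S D := Finset.filter_subset _ _
  have main := count_key hΛ0 hdvd S (maxSet (insert S D)) D hM hD n
  rw [segUseProb, segUseProb, clgNeSProb]
  by_cases hS : S ∈ (Finset.range (offTo Λ lam n)).image (wrap n)
  · rw [if_pos hS] at main ⊢
    rw [← add_div]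
    congr 1
    exact_mod_cast main
  · rw [if_neg hS] at main ⊢
    rw [add_zero] at main ⊢
    congr 1
    exact_mod_cast main

/-- Under shortest-path routing on a ring with `N = η·Λ` nodes, where
all destinations are homed on wavelength `lam`,
`P(segment n used) = P(segment ⌈n⌉_lam used) - P(S ∈ {n,…,⌈n⌉_lam - 1} ∧ G ≠ S)`;
in particular the utilization of any non-critical segment is at most that of the next
critical segment clockwise. -/
theorem stmt6 (N Λ η lam : ℕ) (hN : N = η * Λ) (hlam1 : 1 ≤ lam) (hlamΛ : lam ≤ Λ)
    (hη : 0 < η)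
    (w : Fin N × Finset (Fin N) → ℚ) (hw0 : ∀ x, 0 ≤ w x) (hw1 : ∑ x, w x = 1)
    (hsupp : ∀ x, w x ≠ 0 → x.2 ⊆ homed N Λ lam) (n : Fin N) :
    (∑ x, w x * segUseProb (insert x.1 x.2) x.1 n)
      = (∑ x, w x * segUseProb (insert x.1 x.2) x.1 (wrap n (offTo Λ lam n)))
        - (∑ x, w x *
            (if x.1 ∈ (Finset.range (offTo Λ lam n)).image (wrap n)
              then clgNeSProb (insert x.1 x.2) x.1 else 0)) ∧
    (∑ x, w x * segUseProb (insert x.1 x.2) x.1 n)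
      ≤ (∑ x, w x * segUseProb (insert x.1 x.2) x.1 (wrap n (offTo Λ lam n))) := by
  have hΛ0 : 0 < Λ := lt_of_lt_of_le hlam1 hlamΛ
  have hdvd : Λ ∣ N := by rw [hN]; exact dvd_mul_left Λ η
  have hpt : ∀ x : Fin N × Finset (Fin N),
      w x * segUseProb (insert x.1 x.2) x.1 n
        + w x * (if x.1 ∈ (Finset.range (offTo Λ lam n)).image (wrap n)
            then clgNeSProb (insert x.1 x.2) x.1 else 0)
      = w x * segUseProb (insert x.1 x.2) x.1 (wrap n (offTo Λ lam n)) := by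
    intro x
    by_cases hw : w x = 0
    · simp [hw]
    · rw [← mul_add, keyQ hΛ0 hdvd x.1 x.2 (hsupp x hw) n]
  have heq : (∑ x, w x * segUseProb (insert x.1 x.2) x.1 n)
      + (∑ x, w x *
          (if x.1 ∈ (Finset.range (offTo Λ lam n)).image (wrap n)
            then clgNeSProb (insert x.1 x.2) x.1 else 0))
      = ∑ x, w x * segUseProb (insert x.1 x.2) x.1 (wrap n (offTo Λ lam n)) := by
    rw [← Finset.sum_add_distrib]
    exact Finset.sum_congr rfl (fun x _ => hpt x)
  have hnonneg : 0 ≤ ∑ x, w x *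
      (if x.1 ∈ (Finset.range (offTo Λ lam n)).image (wrap n)
        then clgNeSProb (insert x.1 x.2) x.1 else 0) := by
    apply Finset.sum_nonneg
    intro x _
    apply mul_nonneg (hw0 x)
    split
    · simp only [clgNeSProb]
      positivity
    · exact le_refl 0
  constructor
  · linarith
  · linarith

end
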